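/- arXiv:2104.00335 — 3 statements merged into one kernel-verified Lean document; each statement's English description precedes it below -/
import Mathlib

section
/- Let G be a group with a homogeneous norm ‖·‖ (left-invariant homogeneous distance d(x,y) = ‖x⁻¹y‖), and let V, L be subgroups of G with G = V·L and V ∩ L = {0}, so that every g ∈ G has unique projections P_V(g) ∈ V, P_L(g) ∈ L with g = P_V(g)·P_L(g). Assume there is a constant C₁ ∈ (0,1] such that for all p ∈ G: C₁‖P_L(p)‖ ≤ dist(p,V) ≤ ‖P_L(p)‖ and C₁(‖P_L(p)‖ + ‖P_V(p)‖) ≤ ‖p‖ ≤ ‖P_L(p)‖ + ‖P_V(p)‖. Define, for α > 0, the cones C_V(α) = {w : dist(w,V) ≤ α‖w‖} and C_{V,L}(α) = {w : ‖P_L(w)‖ ≤ α‖P_V(w)‖}. Then for every 0 < α < C₁: C_{V,L}(C₁α) ⊆ C_V(α) ⊆ C_{V,L}(α/(C₁−α)). -/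
open Metric

/-- Equivalence of the cones `C_{V,L}` and `C_V` below the threshold `C₁`. -/
theorem stmt_7 {G : Type*} [Group G] [MetricSpace G]
    (hdleft : ∀ z x y : G, dist (z * x) (z * y) = dist x y)
    (V L : Subgroup G) (hVL : V ⊓ L = ⊥)
    (PV PL : G → G)
    (hfact : ∀ g : G, PV g ∈ V ∧ PL g ∈ L ∧ g = PV g * PL g)
    (huniq : ∀ g v l : G, v ∈ V → l ∈ L → g = v * l → v = PV g ∧ l = PL g)
    (C₁ : ℝ) (hC₁0 : 0 < C₁) (hC₁1 : C₁ ≤ 1)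
    (hproj : ∀ p : G,
      C₁ * dist (PL p) 1 ≤ infDist p (V : Set G) ∧
      infDist p (V : Set G) ≤ dist (PL p) 1 ∧
      C₁ * (dist (PL p) 1 + dist (PV p) 1) ≤ dist p 1 ∧
      dist p 1 ≤ dist (PL p) 1 + dist (PV p) 1)
    (α : ℝ) (hα0 : 0 < α) (hα : α < C₁) :
    {w : G | dist (PL w) 1 ≤ (C₁ * α) * dist (PV w) 1} ⊆
        {w : G | infDist w (V : Set G) ≤ α * dist w 1} ∧
    {w : G | infDist w (V : Set G) ≤ α * dist w 1} ⊆
        {w : G | dist (PL w) 1 ≤ (α / (C₁ - α)) * dist (PV w) 1} := by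
  have hCα : 0 < C₁ - α := by linarith
  constructor
  · intro w hw
    simp only [Set.mem_setOf_eq] at hw ⊢
    obtain ⟨h1, h2, h3, h4⟩ := hproj w
    have ha : (0:ℝ) ≤ dist (PL w) 1 := dist_nonneg
    have hb : (0:ℝ) ≤ dist (PV w) 1 := dist_nonneg
    calc infDist w (V : Set G) ≤ dist (PL w) 1 := h2
      _ ≤ C₁ * α * dist (PV w) 1 := hw
      _ ≤ α * dist w 1 := by nlinarith [mul_le_mul_of_nonneg_left h3 hα0.le, mul_nonneg hC₁0.le ha]
  · intro w hw
    simp only [Set.mem_setOf_eq] at hw ⊢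
    obtain ⟨h1, h2, h3, h4⟩ := hproj w
    rw [div_mul_eq_mul_div, le_div_iff₀ hCα]
    nlinarith [dist_nonneg (x := PV w) (y := 1), dist_nonneg (x := PL w) (y := 1)]
end

section
/- Let G be a group with homogeneous norm and V, L complementary subgroups with splitting projections P_V, P_L (every g factors uniquely as g = P_V(g)·P_L(g), P_V(g) ∈ V, P_L(g) ∈ L). Fix α ≥ 0 and define C_{V,L}(α) = {w : ‖P_L(w)‖ ≤ α‖P_V(w)‖}. Suppose Γ ⊆ G satisfies: for every p ∈ Γ, Γ ⊆ p·C_{V,L}(α) (i.e. p⁻¹q ∈ C_{V,L}(α) for all q ∈ Γ). Then the restriction of P_V to Γ is injective; consequently Γ is the intrinsic graph of a function φ: P_V(Γ) → L, i.e. Γ = {v·φ(v) : v ∈ P_V(Γ)}. -/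
open Metric

/-- A `C_{V,L}(α)`-set is the intrinsic graph of a function `φ : P_V(Γ) → L`:
the projection `P_V` is injective on `Γ`. -/
theorem stmt_10 {G : Type*} [Group G] [MetricSpace G]
    (V L : Subgroup G) (hVL : V ⊓ L = ⊥)
    (PV PL : G → G)
    (hfact : ∀ g : G, PV g ∈ V ∧ PL g ∈ L ∧ g = PV g * PL g)
    (huniq : ∀ g v l : G, v ∈ V → l ∈ L → g = v * l → v = PV g ∧ l = PL g)
    (α : ℝ) (hα : 0 ≤ α) (Γ : Set G)
    (hΓ : ∀ p ∈ Γ, ∀ q ∈ Γ, dist (PL (p⁻¹ * q)) 1 ≤ α * dist (PV (p⁻¹ * q)) 1) :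
    Set.InjOn PV Γ ∧ ∃ φ : G → G, (∀ v ∈ PV '' Γ, φ v ∈ L) ∧
      Γ = (fun v => v * φ v) '' (PV '' Γ) := by
  have hinj : Set.InjOn PV Γ := by
    intro p hp q hq hpq
    -- p⁻¹ * q ∈ L
    have hmem : (PL p)⁻¹ * PL q ∈ L :=
      mul_mem (inv_mem (hfact p).2.1) (hfact q).2.1
    have hfac : p⁻¹ * q = 1 * ((PL p)⁻¹ * PL q) := by
      rw [one_mul]
      conv_lhs => rw [(hfact p).2.2, (hfact q).2.2]
      rw [hpq]
      group
    obtain ⟨h1, h2⟩ := huniq (p⁻¹ * q) 1 ((PL p)⁻¹ * PL q) (one_mem V) hmem hfac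
    have := hΓ p hp q hq
    rw [← h1, ← h2, dist_self, mul_zero] at this
    have h3 : (PL p)⁻¹ * PL q = 1 := by
      have := le_antisymm this dist_nonneg
      rwa [dist_eq_zero] at this
    have h4 : p⁻¹ * q = 1 := by rw [hfac, h3, one_mul]
    calc p = q * (p⁻¹ * q)⁻¹ := by group
    _ = q := by rw [h4]; group
  refine ⟨hinj, fun v => PL (Function.invFunOn PV Γ v), ?_, ?_⟩
  · rintro v ⟨p, hp, rfl⟩
    exact (hfact _).2.1
  · ext x
    constructor
    · intro hx
      refine ⟨PV x, ⟨x, hx, rfl⟩, ?_⟩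
      have hm : Function.invFunOn PV Γ (PV x) ∈ Γ :=
        Function.invFunOn_mem ⟨x, hx, rfl⟩
      have he : PV (Function.invFunOn PV Γ (PV x)) = PV x :=
        Function.invFunOn_eq ⟨x, hx, rfl⟩
      have := hinj hm hx he
      simp only
      rw [this, ← (hfact x).2.2]
    · rintro ⟨v, ⟨p, hp, rfl⟩, rfl⟩
      have hm : Function.invFunOn PV Γ (PV p) ∈ Γ :=
        Function.invFunOn_mem ⟨p, hp, rfl⟩
      have he : PV (Function.invFunOn PV Γ (PV p)) = PV p :=
        Function.invFunOn_eq ⟨p, hp, rfl⟩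
      have : PV p * PL (Function.invFunOn PV Γ (PV p)) =
          Function.invFunOn PV Γ (PV p) := by
        conv_rhs => rw [(hfact (Function.invFunOn PV Γ (PV p))).2.2]
        rw [he]
      simpa [this] using hm
end

section
/- Let G be a homogeneous group with left-invariant homogeneous distance d and dilations δ_λ, and let Γ ⊆ G, w ∈ Γ. Suppose there is a closed set V(w) ⊆ G, invariant under all dilations δ_λ and containing the identity 0, such that for every k > 0 the sets δ_λ(w⁻¹·Γ) ∩ B(0,k) converge to V(w) ∩ B(0,k) in Hausdorff distance as λ → ∞. Then for every β > 0 there exists ρ > 0 such that Γ ∩ B(w,ρ) ⊆ w·C_{V(w)}(β), where C_{V(w)}(β) = {p ∈ G : dist(p, V(w)) ≤ β‖p‖}. -/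
/-!
Write `q = w⁻¹ p` and `r = ‖q‖ = d(p, w)`. The blow-up `x = δ_{1/r} q` lies on the unit sphere,
so once `1/r` is large enough the Hausdorff convergence at scale `1` puts `x` within `β` of
`V(w)`. Since `V(w)` is dilation invariant and `δ_r` scales distances by `r`, rescaling back gives
`dist(q, V(w)) ≤ r β = β ‖q‖`.
-/

open Metric Filter Topology

lemma Metric.infDist_le_hausdorffDist_inter_closedBall {X : Type*} [MetricSpace X]
    {s t : Set X} {x c : X} {k : ℝ} (hx : x ∈ s) (hxk : dist x c ≤ k) (hc : c ∈ t) :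
    infDist x t ≤ hausdorffDist (s ∩ closedBall c k) (t ∩ closedBall c k) := by
  have hxs : x ∈ s ∩ closedBall c k := ⟨hx, hxk⟩
  have hct : c ∈ t ∩ closedBall c k := ⟨hc, mem_closedBall_self (dist_nonneg.trans hxk)⟩
  have hfin : hausdorffEDist (s ∩ closedBall c k) (t ∩ closedBall c k) ≠ ⊤ :=
    hausdorffEDist_ne_top_of_nonempty_of_bounded ⟨x, hxs⟩ ⟨c, hct⟩
      (isBounded_closedBall.subset Set.inter_subset_right)
      (isBounded_closedBall.subset Set.inter_subset_right)
  calc infDist x t ≤ infDist x (t ∩ closedBall c k) :=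
        infDist_le_infDist_of_subset Set.inter_subset_left ⟨c, hct⟩
    _ ≤ _ := infDist_le_hausdorffDist_of_mem hxs hfin

section Dilation

variable {G : Type*} [MetricSpace G] {δ : ℝ → G → G} {l : ℝ}

lemma dist_dilation_one [Group G] (hmul : ∀ x y : G, δ l (x * y) = δ l x * δ l y)
    (hdist : ∀ x y : G, dist (δ l x) (δ l y) = l * dist x y) (x : G) :
    dist (δ l x) 1 = l * dist x 1 := by
  have hone : δ l 1 = 1 := (MonoidHom.mk' (δ l) hmul).map_one
  rw [← hdist, hone]

lemma infDist_dilation_le {V : Set G} (hl : 0 < l) (hV : ∀ v ∈ V, δ l v ∈ V) (hne : V.Nonempty)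
    (hdist : ∀ x y : G, dist (δ l x) (δ l y) = l * dist x y) (x : G) :
    infDist (δ l x) V ≤ l * infDist x V := by
  rw [← div_le_iff₀' hl, le_infDist hne]
  intro v hv
  rw [div_le_iff₀' hl, ← hdist]
  exact infDist_le_dist_of_mem (hV v hv)

end Dilation

lemma dist_inv_mul_one {G : Type*} [Group G] [MetricSpace G]
    (hdleft : ∀ z x y : G, dist (z * x) (z * y) = dist x y) (w p : G) :
    dist (w⁻¹ * p) 1 = dist p w := by
  rw [← inv_mul_cancel w, hdleft]

theorem stmt_15_general {G : Type*} [Group G] [MetricSpace G]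
    (δ : ℝ → G → G)
    (hδmul : ∀ l, 0 < l → ∀ x y : G, δ l (x * y) = δ l x * δ l y)
    (hδcomp : ∀ l s, 0 < l → 0 < s → ∀ x : G, δ l (δ s x) = δ (l * s) x)
    (hδone : ∀ x : G, δ 1 x = x)
    (hdleft : ∀ z x y : G, dist (z * x) (z * y) = dist x y)
    (hdhom : ∀ l, 0 < l → ∀ x y : G, dist (δ l x) (δ l y) = l * dist x y)
    (Γ : Set G) (w : G)
    (Vw : Set G) (hV1 : (1 : G) ∈ Vw)
    (hVdil : ∀ l, 0 < l → ∀ v ∈ Vw, δ l v ∈ Vw)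
    (htan : ∀ k : ℝ, 0 < k →
      Tendsto (fun lam : ℝ =>
          hausdorffDist (((fun p => δ lam (w⁻¹ * p)) '' Γ) ∩ closedBall (1 : G) k)
            (Vw ∩ closedBall (1 : G) k))
        atTop (𝓝 0)) :
    ∀ β : ℝ, 0 < β → ∃ ρ : ℝ, 0 < ρ ∧
      ∀ p ∈ Γ ∩ closedBall w ρ, infDist (w⁻¹ * p) Vw ≤ β * dist (w⁻¹ * p) 1 := by
  intro β hβ
  obtain ⟨L, hL⟩ := eventually_atTop.mp ((htan 1 one_pos).eventually (gt_mem_nhds hβ))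
  refine ⟨(max L 1)⁻¹, by positivity, ?_⟩
  rintro p ⟨hpΓ, hpw⟩
  set r := dist (w⁻¹ * p) 1 with hr
  rcases (dist_nonneg : 0 ≤ r).eq_or_lt with hr0 | hrpos
  · rw [dist_eq_zero.mp hr0.symm, infDist_zero_of_mem hV1]
    exact mul_nonneg hβ.le hr0.le
  have hLr : L ≤ r⁻¹ := (le_max_left L 1).trans <| (le_inv_comm₀ (by positivity) hrpos).mpr <|
    (dist_inv_mul_one hdleft w p).trans_le (mem_closedBall.mp hpw)
  set x := δ r⁻¹ (w⁻¹ * p)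
  have hx : dist x 1 = 1 := by
    rw [dist_dilation_one (hδmul _ (inv_pos.mpr hrpos)) (hdhom _ (inv_pos.mpr hrpos)), ← hr,
      inv_mul_cancel₀ hrpos.ne']
  have hxV : infDist x Vw < β :=
    (infDist_le_hausdorffDist_inter_closedBall
      (Set.mem_image_of_mem (fun p => δ r⁻¹ (w⁻¹ * p)) hpΓ) hx.le hV1).trans_lt (hL _ hLr)
  have hrx : δ r x = w⁻¹ * p := by
    rw [hδcomp _ _ hrpos (inv_pos.mpr hrpos), mul_inv_cancel₀ hrpos.ne', hδone]
  calc infDist (w⁻¹ * p) Vw = infDist (δ r x) Vw := by rw [hrx]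
    _ ≤ r * infDist x Vw := infDist_dilation_le hrpos (hVdil r hrpos) ⟨1, hV1⟩ (hdhom r hrpos) x
    _ ≤ β * r := by rw [mul_comm β]; exact mul_le_mul_of_nonneg_left hxV.le hrpos.le

/-- If the blow-ups `δ_λ(w⁻¹Γ)` converge in local Hausdorff distance to a
dilation-invariant closed set `V(w)`, then near `w` the set `Γ` is contained in
arbitrarily small cones `w·C_{V(w)}(β)`. -/
theorem stmt_15 {G : Type*} [Group G] [MetricSpace G]
    (δ : ℝ → G → G)
    (hδmul : ∀ l, 0 < l → ∀ x y : G, δ l (x * y) = δ l x * δ l y)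
    (hδcomp : ∀ l s, 0 < l → 0 < s → ∀ x : G, δ l (δ s x) = δ (l * s) x)
    (hδone : ∀ x : G, δ 1 x = x)
    (hdleft : ∀ z x y : G, dist (z * x) (z * y) = dist x y)
    (hdhom : ∀ l, 0 < l → ∀ x y : G, dist (δ l x) (δ l y) = l * dist x y)
    (Γ : Set G) (w : G) (hw : w ∈ Γ)
    (Vw : Set G) (hVclosed : IsClosed Vw) (hV1 : (1 : G) ∈ Vw)
    (hVdil : ∀ l, 0 < l → ∀ v ∈ Vw, δ l v ∈ Vw)
    (htan : ∀ k : ℝ, 0 < k →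
      Tendsto (fun lam : ℝ =>
          hausdorffDist (((fun p => δ lam (w⁻¹ * p)) '' Γ) ∩ closedBall (1 : G) k)
            (Vw ∩ closedBall (1 : G) k))
        atTop (𝓝 0)) :
    ∀ β : ℝ, 0 < β → ∃ ρ : ℝ, 0 < ρ ∧
      ∀ p ∈ Γ ∩ closedBall w ρ, infDist (w⁻¹ * p) Vw ≤ β * dist (w⁻¹ * p) 1 :=
  stmt_15_general δ hδmul hδcomp hδone hdleft hdhom Γ w Vw hV1 hVdil htan
end
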